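/- arXiv:2004.02851 — 3 statements merged into one kernel-verified Lean document; each statement's English description precedes it below -/
import Mathlib

section
/- Invariance theorem (Kolmogorov): There exists a machine U such that for every machine M there is a constant c ∈ ℕ with C_U(τ) ≤ C_M(τ) + c for all strings τ ∈ 2^{<ω}. -/
open scoped ENNReal NNReal Classical

namespace AR

/-- Elements of Cantor space `2^ω`: infinite binary sequences. -/
abbrev Seq := ℕ → Bool

/-- Finite binary strings `2^{<ω}`. -/
abbrev Str := List Bool

/-- The first `n` bits of a sequence `A`, as a finite string (`A↾n`). -/
def pre (A : Seq) (n : ℕ) : Str := List.ofFn fun i : Fin n => A i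

/-- The basic clopen cylinder `[σ]` of all sequences extending `σ`. -/
def cyl (σ : Str) : Set Seq := {A | pre A σ.length = σ}

/-- A measure on Cantor space is *fair-coin* if every cylinder `[σ]` has measure
`2^{-|σ|}`; this uniquely characterizes the usual product measure `μ` on `2^ω`. -/
def FairCoin (μ : MeasureTheory.Measure Seq) : Prop :=
  ∀ σ : Str, μ (cyl σ) = (2 : ℝ≥0∞)⁻¹ ^ σ.length

/-- A machine is a partial computable function `2^{<ω} ⇀ 2^{<ω}`. -/
def IsMachine (M : Str →. Str) : Prop := Partrec M

/-- Kolmogorov complexity of `τ` relative to the machine `M`: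
`C_M(τ) = min{|σ| : M(σ)↓ = τ}`, with value `∞` if no such `σ` exists. -/
noncomputable def Cplx (M : Str →. Str) (τ : Str) : ℕ∞ :=
  sInf ((fun σ : Str => (σ.length : ℕ∞)) '' {σ | τ ∈ M σ})

/-- A universal machine: a machine simulating every machine up to an additive
constant.  `Cplx U` for universal `U` is plain Kolmogorov complexity `C`. -/
def UniversalMachine (U : Str →. Str) : Prop :=
  IsMachine U ∧ ∀ M : Str →. Str, IsMachine M → ∃ c : ℕ, ∀ τ, Cplx U τ ≤ Cplx M τ + c

/-- A set of strings is prefix-free if none of its elements is a proper initial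
segment of another. -/
def PrefixFree (S : Set Str) : Prop :=
  ∀ σ ∈ S, ∀ τ ∈ S, σ <+: τ → σ = τ

/-- A prefix-free machine: a machine whose domain is prefix-free. -/
def PrefixFreeMachine (M : Str →. Str) : Prop :=
  IsMachine M ∧ PrefixFree {σ | (M σ).Dom}

/-- A universal prefix-free machine.  `Cplx U` for such `U` is prefix-free
Kolmogorov complexity `K`. -/
def UniversalPFMachine (U : Str →. Str) : Prop :=
  PrefixFreeMachine U ∧
    ∀ M : Str →. Str, PrefixFreeMachine M → ∃ c : ℕ, ∀ τ, Cplx U τ ≤ Cplx M τ + c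

/-- A c.e. (recursively enumerable) predicate. -/
def CEPred {α} [Primcodable α] (p : α → Prop) : Prop :=
  Partrec fun a => Part.assert (p a) fun _ => Part.some ()

/-- A Martin-Löf test: a sequence of uniformly Σ⁰₁ classes `U i`, given by a single
c.e. set `W` of pairs, with `μ (U i) ≤ 2^{-i}`. -/
def MLTest (μ : MeasureTheory.Measure Seq) (U : ℕ → Set Seq) : Prop :=
  ∃ W : Set (ℕ × Str), CEPred (· ∈ W) ∧
    (∀ i, U i = ⋃ σ ∈ {σ : Str | (i, σ) ∈ W}, cyl σ) ∧
    ∀ i, μ (U i) ≤ (2 : ℝ≥0∞)⁻¹ ^ i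

/-- `A` is Martin-Löf random if it passes every Martin-Löf test. -/
def MLRandom (μ : MeasureTheory.Measure Seq) (A : Seq) : Prop :=
  ∀ U : ℕ → Set Seq, MLTest μ U → A ∉ ⋂ i, U i


/-!
The universal machine reads its input as `1^e 0 ρ` and runs the `e`-th partial recursive code
on `ρ`. A machine `M` computed by the code with index `e` is then simulated on every input `σ`
by the input `1^e 0 σ`, which is only `e + 1` bits longer, so `C_U ≤ C_M + (e + 1)`.
-/

open Nat.Partrec (Code)

def selfDelimit (e : ℕ) (σ : Str) : Str := List.replicate e true ++ false :: σ

-- A string `1^e` without a `0` is read as `(e, [])`.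
def unDelimit (σ : Str) : ℕ × Str := (σ.idxOf false, σ.drop (σ.idxOf false + 1))

theorem length_selfDelimit (e : ℕ) (σ : Str) : (selfDelimit e σ).length = σ.length + (e + 1) := by
  simp only [selfDelimit, List.length_append, List.length_replicate, List.length_cons]
  ring

theorem unDelimit_selfDelimit (e : ℕ) (σ : Str) : unDelimit (selfDelimit e σ) = (e, σ) := by
  have hidx : (selfDelimit e σ).idxOf false = e := by
    induction e with
    | zero => simp [selfDelimit]
    | succ e ih => simpa [selfDelimit, List.replicate_succ, List.idxOf_cons] using ih
  have hdrop : (selfDelimit e σ).drop (e + 1) = σ := by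
    have hpre : (List.replicate e true ++ [false]).length = e + 1 := by simp
    rw [selfDelimit, ← List.singleton_append, ← List.append_assoc, ← hpre, List.drop_left]
  simp [unDelimit, hidx, hdrop]

theorem primrec_unDelimit : Primrec unDelimit :=
  have hidx : Primrec fun σ : Str => σ.idxOf false := Primrec.list_idxOf.comp (.const false) .id
  hidx.pair (Primrec.list_drop.comp (Primrec.succ.comp hidx) .id)

noncomputable def universalMachine : Str →. Str := fun σ =>
  ((Denumerable.ofNat Code (unDelimit σ).1).eval (Encodable.encode (unDelimit σ).2)).bind
    fun n => Part.ofOption (Encodable.decode n)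

theorem isMachine_universalMachine : IsMachine universalMachine := by
  have hrun : Partrec fun σ : Str =>
      (Denumerable.ofNat Code (unDelimit σ).1).eval (Encodable.encode (unDelimit σ).2) :=
    Code.eval_part.comp ((Computable.ofNat _).comp (Computable.fst.comp primrec_unDelimit.to_comp))
      (Computable.encode.comp (Computable.snd.comp primrec_unDelimit.to_comp))
  exact hrun.bind (Computable.ofOption (Computable.decode.comp Computable.snd))

theorem mem_universalMachine_selfDelimit {M : Str →. Str} {c : Code}
    (hc : c.eval = fun n =>
      (Encodable.decode (α := Str) n : Part Str).bind fun σ => (M σ).map Encodable.encode)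
    {σ τ : Str} (h : τ ∈ M σ) : τ ∈ universalMachine (selfDelimit (Encodable.encode c) σ) := by
  simp only [universalMachine, unDelimit_selfDelimit, Denumerable.ofNat_encode, hc,
    Encodable.encodek, Part.coe_some, Part.bind_some]
  exact Part.mem_bind_iff.2 ⟨_, Part.mem_map _ h, by simp [Encodable.encodek]⟩

theorem Cplx_le_length {M : Str →. Str} {σ τ : Str} (h : τ ∈ M σ) : Cplx M τ ≤ σ.length :=
  sInf_le ⟨σ, h, rfl⟩

theorem Cplx_le_Cplx_add {U M : Str →. Str} {f : Str → Str} {c : ℕ}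
    (hf : ∀ σ τ, τ ∈ M σ → τ ∈ U (f σ)) (hlen : ∀ σ, (f σ).length ≤ σ.length + c) (τ : Str) :
    Cplx U τ ≤ Cplx M τ + c := by
  unfold Cplx
  rw [ENat.sInf_add]
  refine le_iInf₂ ?_
  rintro _ ⟨σ, hσ, rfl⟩
  calc Cplx U τ ≤ (f σ).length := Cplx_le_length (hf σ τ hσ)
    _ ≤ σ.length + c := by exact_mod_cast hlen σ

/-- **Invariance theorem** (Kolmogorov): there is a machine `U` such that for every
machine `M` there is a constant `c` with `C_U(τ) ≤ C_M(τ) + c` for all strings `τ`. -/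
theorem invariance_theorem :
    ∃ U : Str →. Str, IsMachine U ∧
      ∀ M : Str →. Str, IsMachine M → ∃ c : ℕ, ∀ τ : Str, Cplx U τ ≤ Cplx M τ + c := by
  refine ⟨universalMachine, isMachine_universalMachine, fun M hM => ?_⟩
  obtain ⟨c, hc⟩ := Code.exists_code.1 hM
  exact ⟨Encodable.encode c + 1, Cplx_le_Cplx_add (fun _ _ => mem_universalMachine_selfDelimit hc)
    (fun σ => (length_selfDelimit _ σ).le)⟩

end AR
end

section
/- Existence of a universal Martin-Löf test (Martin-Löf): There exists a Martin-Löf test ⟨U_i⟩_{i∈ω} such that for every Martin-Löf test ⟨V_i⟩_{i∈ω}, ⋂_{i∈ω} V_i ⊆ ⋂_{i∈ω} U_i. -/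
/-!
Enumerate all c.e. sets of pairs `W_e` uniformly and trim every level `k` of every `W_e`: a string
enumerated at stage `s` is kept only if the cylinders enumerated into that level by stage `s` still
have measure at most `2^{-k}`. This is decidable, because a finite union of cylinders is the
disjoint union of the cylinders of a prefix antichain, whose measure is a finite dyadic sum.
Trimming leaves the levels of a genuine Martin-Löf test unchanged and brings the measure of
level `k` of every `W_e` down to at most `2^{-k}`. Level `n` of the universal test is the union
over `e` of level `n + e + 1` of the trimmed `W_e`: its measure is at most
`∑ₑ 2^{-(n+e+1)} = 2^{-n}`, and it contains level `n + e + 1` of the test enumerated by `W_e`.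
-/

open scoped ENNReal NNReal Classical

namespace AR

open MeasureTheory Primrec Encodable
open Nat.Partrec (Code)
open Nat.Partrec.Code

theorem length_pre (A : Seq) (n : ℕ) : (pre A n).length = n := List.length_ofFn

theorem pre_prefix_pre (A : Seq) {m n : ℕ} (h : m ≤ n) : pre A m <+: pre A n := by
  rw [List.prefix_iff_eq_take]
  apply List.ext_getElem <;> simp [pre, h]

theorem mem_cyl {A : Seq} {σ : Str} : A ∈ cyl σ ↔ pre A σ.length = σ := Iff.rfl

theorem cyl_subset_cyl {σ τ : Str} (h : σ <+: τ) : cyl τ ⊆ cyl σ := fun A hA => by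
  have hpre : pre A σ.length <+: τ := mem_cyl.1 hA ▸ pre_prefix_pre A h.length_le
  exact (List.prefix_of_prefix_length_le hpre h (length_pre A _).le).eq_of_length
    (length_pre A _)

theorem disjoint_cyl {σ τ : Str} (h : ¬σ <+: τ ∧ ¬τ <+: σ) : Disjoint (cyl σ) (cyl τ) := by
  refine Set.disjoint_left.2 fun A hσ hτ => ?_
  have hσ' := pre_prefix_pre A (Nat.le_add_right σ.length τ.length)
  have hτ' := pre_prefix_pre A (Nat.le_add_left τ.length σ.length)
  rw [mem_cyl.1 hσ] at hσ'
  rw [mem_cyl.1 hτ] at hτ'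
  exact (List.prefix_or_prefix_of_prefix hσ' hτ').elim h.1 h.2

theorem measurableSet_cyl (σ : Str) : MeasurableSet (cyl σ) := by
  have hcyl : cyl σ = (fun A (i : Fin σ.length) => A i) ⁻¹' {fun i => σ[i]} := by
    ext A
    simp only [mem_cyl, pre, Set.mem_preimage, Set.mem_singleton_iff]
    conv_lhs => rhs; rw [← List.ofFn_getElem (xs := σ)]
    exact List.ofFn_inj
  rw [hcyl]
  exact measurable_pi_lambda _ (fun i => measurable_pi_apply _) (measurableSet_singleton _)

def cylUnion (L : List Str) : Set Seq := ⋃ τ ∈ L, cyl τ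

@[simp]
theorem cylUnion_nil : cylUnion [] = ∅ := by simp [cylUnion]

@[simp]
theorem cylUnion_cons (σ : Str) (L : List Str) : cylUnion (σ :: L) = cyl σ ∪ cylUnion L := by
  simp [cylUnion]

theorem measurableSet_cylUnion (L : List Str) : MeasurableSet (cylUnion L) :=
  .iUnion fun τ => .iUnion fun _ => measurableSet_cyl τ

def IsPrefixAntichain (L : List Str) : Prop := L.Pairwise fun σ τ => ¬σ <+: τ ∧ ¬τ <+: σ

theorem measure_cylUnion {μ : Measure Seq} (hμ : FairCoin μ) {L : List Str}
    (hL : IsPrefixAntichain L) :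
    μ (cylUnion L) = (L.map fun τ => (2 : ℝ≥0∞)⁻¹ ^ τ.length).sum := by
  induction L with
  | nil => simp
  | cons σ L ih =>
    obtain ⟨hσ, hL⟩ := List.pairwise_cons.1 hL
    have hdisj : Disjoint (cyl σ) (cylUnion L) := by
      simpa [cylUnion] using fun τ hτ => disjoint_cyl (hσ τ hτ)
    rw [cylUnion_cons, measure_union hdisj (measurableSet_cylUnion L), ih hL, hμ]
    rfl

def insertCyl (σ : Str) (L : List Str) : List Str :=
  if ∃ τ ∈ L, τ <+: σ then L else σ :: L.filter fun τ => ¬σ <+: τ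

theorem cylUnion_insertCyl (σ : Str) (L : List Str) :
    cylUnion (insertCyl σ L) = cyl σ ∪ cylUnion L := by
  unfold insertCyl
  split_ifs with h
  · obtain ⟨τ, hτ, hτσ⟩ := h
    refine (Set.union_eq_right.2 ((cyl_subset_cyl hτσ).trans ?_)).symm
    exact Set.subset_biUnion_of_mem (u := cyl) hτ
  · rw [cylUnion_cons]
    refine Set.Subset.antisymm ?_ ?_
    · refine Set.union_subset_union_right _ (Set.biUnion_mono (fun τ hτ => ?_) fun _ _ => le_rfl)
      exact List.mem_of_mem_filter hτ
    · refine Set.union_subset Set.subset_union_left (Set.iUnion₂_subset fun τ hτ => ?_)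
      by_cases hστ : σ <+: τ
      · exact (cyl_subset_cyl hστ).trans Set.subset_union_left
      · have hmem : τ ∈ L.filter fun τ => ¬σ <+: τ := List.mem_filter.2 ⟨hτ, decide_eq_true hστ⟩
        exact Set.subset_union_of_subset_right (Set.subset_biUnion_of_mem (u := cyl) hmem) _

theorem IsPrefixAntichain.insertCyl {L : List Str} (hL : IsPrefixAntichain L) (σ : Str) :
    IsPrefixAntichain (insertCyl σ L) := by
  unfold AR.insertCyl
  split_ifs with h
  · exact hL
  · refine List.pairwise_cons.2 ⟨fun τ hτ => ?_, hL.sublist List.filter_sublist⟩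
    obtain ⟨hτL, hστ⟩ := List.mem_filter.1 hτ
    exact ⟨by simpa using hστ, fun hτσ => h ⟨τ, hτL, hτσ⟩⟩

def antichainOf (L : List Str) : List Str := L.foldr insertCyl []

theorem cylUnion_antichainOf (L : List Str) : cylUnion (antichainOf L) = cylUnion L := by
  induction L with
  | nil => rfl
  | cons σ L ih =>
    rw [antichainOf, List.foldr_cons, cylUnion_insertCyl, ← antichainOf, ih, cylUnion_cons]

theorem isPrefixAntichain_antichainOf (L : List Str) : IsPrefixAntichain (antichainOf L) := by
  induction L with
  | nil => exact List.Pairwise.nil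
  | cons σ L ih => exact ih.insertCyl σ

/- `∑ τ ∈ L, 2^{-|τ|} ≤ 2^{-k}` multiplied by `2^{k+N}`: the total length `N` bounds every `|τ|`,
so none of the natural-number subtractions truncates. -/
def WeightLE (k : ℕ) (L : List Str) : Prop :=
  (L.map fun τ => 2 ^ (k + (L.map List.length).sum - τ.length)).sum ≤ 2 ^ (L.map List.length).sum

theorem inv_two_pow_mul_two_pow {a b : ℕ} (h : a ≤ b) :
    (2 : ℝ≥0∞)⁻¹ ^ a * 2 ^ b = 2 ^ (b - a) := by
  rw [← Nat.add_sub_cancel' h, pow_add, ← mul_assoc, ← mul_pow,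
    ENNReal.inv_mul_cancel two_ne_zero ENNReal.ofNat_ne_top, one_pow, one_mul,
    Nat.add_sub_cancel_left]

theorem weightLE_iff {k : ℕ} {L : List Str} :
    WeightLE k L ↔ (L.map fun τ => (2 : ℝ≥0∞)⁻¹ ^ τ.length).sum ≤ 2⁻¹ ^ k := by
  set N := (L.map List.length).sum
  have hlen : ∀ τ ∈ L, τ.length ≤ k + N := fun τ hτ =>
    (List.le_sum_of_mem (List.mem_map_of_mem hτ)).trans (Nat.le_add_left _ _)
  rw [← ENNReal.mul_le_mul_iff_left (pow_ne_zero (k + N) two_ne_zero)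
    (ENNReal.pow_ne_top ENNReal.ofNat_ne_top), ← List.sum_map_mul_right,
    inv_two_pow_mul_two_pow (Nat.le_add_right k N), Nat.add_sub_cancel_left,
    List.map_congr_left fun τ hτ => inv_two_pow_mul_two_pow (hlen τ hτ), WeightLE,
    ← Nat.cast_le (α := ℝ≥0∞)]
  simp only [Nat.cast_list_sum, List.map_map, Function.comp_def, Nat.cast_pow, Nat.cast_ofNat, N]

def MeasureLE (k : ℕ) (L : List Str) : Prop := WeightLE k (antichainOf L)

theorem measureLE_iff {μ : Measure Seq} (hμ : FairCoin μ) {k : ℕ} {L : List Str} :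
    MeasureLE k L ↔ μ (cylUnion L) ≤ 2⁻¹ ^ k := by
  rw [MeasureLE, weightLE_iff, ← cylUnion_antichainOf,
    measure_cylUnion hμ (isPrefixAntichain_antichainOf L)]

theorem primrecRel_isPrefix : PrimrecRel fun σ τ : Str => σ <+: τ :=
  (Primrec.eq.comp fst (list_take.comp (list_length.comp fst) snd)).of_eq fun _ =>
    List.prefix_iff_eq_take.symm

theorem primrec_insertCyl : Primrec₂ insertCyl := by
  have hR : PrimrecRel fun τ σ : Str => ¬σ <+: τ := (primrecRel_isPrefix.comp snd fst).not
  exact Primrec.ite (primrecRel_isPrefix.exists_mem_list.comp snd fst) snd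
    (list_cons.comp fst (hR.listFilter.comp snd fst))

theorem primrec_antichainOf : Primrec antichainOf :=
  list_foldr .id (const []) (primrec_insertCyl.comp (fst.comp snd) (snd.comp snd)).to₂

theorem primrec_list_sum : Primrec (List.sum : List ℕ → ℕ) :=
  list_foldr .id (const 0) (nat_add.comp (fst.comp snd) (snd.comp snd)).to₂

theorem primrec_pow : Primrec₂ ((· ^ ·) : ℕ → ℕ → ℕ) := Primrec₂.unpaired'.1 Nat.Primrec.pow

theorem primrecRel_weightLE : PrimrecRel WeightLE := by
  have hN : Primrec fun x : ℕ × List Str => (x.2.map List.length).sum :=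
    primrec_list_sum.comp (list_map snd (list_length.comp snd).to₂)
  have hweight : Primrec₂ fun (x : ℕ × List Str) (τ : Str) =>
      2 ^ (x.1 + (x.2.map List.length).sum - τ.length) :=
    (primrec_pow.comp (const 2) (nat_sub.comp (nat_add.comp (fst.comp fst) (hN.comp fst))
      (list_length.comp snd))).to₂
  exact nat_le.comp (primrec_list_sum.comp (list_map snd hweight)) (primrec_pow.comp (const 2) hN)

theorem primrecRel_measureLE : PrimrecRel MeasureLE :=
  primrecRel_weightLE.comp fst (primrec_antichainOf.comp snd)

theorem CEPred.exists_code {α : Type*} [Primcodable α] {p : α → Prop} (h : CEPred p) :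
    ∃ c : Code, ∀ a, p a ↔ (eval c (encode a)).Dom := by
  obtain ⟨c, hc⟩ := Nat.Partrec.Code.exists_code.1 h
  refine ⟨c, fun a => ?_⟩
  simp only [hc, encodek, Part.coe_some, Part.bind_some, Part.map_Dom]
  exact ⟨fun hp => ⟨hp, trivial⟩, fun ⟨hp, _⟩ => hp⟩

theorem CEPred.exists_of_primrecPred {α : Type*} [Primcodable α] {p : α → ℕ → Prop}
    (hp : PrimrecPred fun x : α × ℕ => p x.1 x.2) : CEPred fun a => ∃ n, p a n := by
  have hsearch : Partrec fun a => Nat.rfind fun n => (Part.some (decide (p a n)) : Part Bool) :=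
    Partrec.rfind hp.decide.to_comp.partrec
  refine (Partrec.dom_re hsearch).of_eq fun a => Nat.rfind_dom.trans
    ⟨fun ⟨n, hn, _⟩ => ⟨n, of_decide_eq_true (Part.mem_some_iff.1 hn).symm⟩,
      fun ⟨n, hn⟩ => ⟨n, Part.mem_some_iff.2 (decide_eq_true hn).symm, fun _ => trivial⟩⟩

/-- Step `s` of the enumeration of level `k` of the c.e. set of pairs with code `c`: `s` encodes
a running time and a candidate string. -/
def enumAt (c : Code) (k s : ℕ) : Option Str :=
  (decode (α := Str) s.unpair.2).bind fun σ =>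
    bif (evaln s.unpair.1 c (encode (k, σ))).isSome then some σ else none

theorem exists_enumAt_eq_some {c : Code} {k : ℕ} {σ : Str} :
    (∃ s, enumAt c k s = some σ) ↔ (eval c (encode (k, σ))).Dom := by
  constructor
  · rintro ⟨s, hs⟩
    obtain ⟨τ, -, hτ⟩ := Option.bind_eq_some_iff.1 hs
    cases hrun : (evaln s.unpair.1 c (encode (k, τ))).isSome
    · rw [hrun, cond_false] at hτ
      exact absurd hτ (by simp)
    · rw [hrun, cond_true, Option.some_inj] at hτ
      subst hτ
      obtain ⟨x, hx⟩ := Option.isSome_iff_exists.1 hrun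
      exact Part.dom_iff_mem.2 ⟨x, evaln_sound hx⟩
  · intro h
    obtain ⟨t, ht⟩ := evaln_complete.1 (Part.get_mem h)
    have hrun : (evaln t c (encode (k, σ))).isSome := Option.isSome_iff_exists.2 ⟨_, ht⟩
    refine ⟨Nat.pair t (encode σ), ?_⟩
    simp_all [enumAt]

theorem primrec_enumAt : Primrec fun x : (Code × ℕ) × ℕ => enumAt x.1.1 x.1.2 x.2 := by
  have hσ : Primrec fun x : (Code × ℕ) × ℕ => decode (α := Str) x.2.unpair.2 :=
    Primrec.decode.comp (snd.comp (unpair.comp snd))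
  have hrun : Primrec₂ fun (x : (Code × ℕ) × ℕ) (σ : Str) =>
      evaln x.2.unpair.1 x.1.1 (encode (x.1.2, σ)) :=
    primrec_evaln.comp ((((fst.comp (unpair.comp (snd.comp fst))).pair
      (fst.comp (fst.comp fst)))).pair (Primrec.encode.comp ((snd.comp (fst.comp fst)).pair snd)))
  exact option_bind hσ
    (Primrec.cond (option_isSome.comp hrun) (option_some.comp snd) (const none)).to₂

def enumUpTo (c : Code) (k s : ℕ) : List Str := (List.range s).filterMap (enumAt c k)

theorem mem_enumUpTo {c : Code} {k s : ℕ} {σ : Str} :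
    σ ∈ enumUpTo c k s ↔ ∃ m < s, enumAt c k m = some σ := by
  simp [enumUpTo]

theorem monotone_cylUnion_enumUpTo (c : Code) (k : ℕ) :
    Monotone fun s => cylUnion (enumUpTo c k s) :=
  fun s t hst => Set.biUnion_subset_biUnion_left fun σ hσ => by
    obtain ⟨m, hm, h⟩ := mem_enumUpTo.1 hσ
    exact mem_enumUpTo.2 ⟨m, hm.trans_le hst, h⟩

theorem primrec_enumUpTo : Primrec fun x : (Code × ℕ) × ℕ => enumUpTo x.1.1 x.1.2 x.2 :=
  listFilterMap (list_range.comp snd) (primrec_enumAt.comp ((fst.comp fst).pair snd)).to₂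

theorem measure_biUnion_le_of_monotone {α : Type*} [MeasurableSpace α] {μ : Measure α}
    {f : ℕ → Set α} (hf : Monotone f) (S : Set ℕ) {r : ℝ≥0∞} (h : ∀ s ∈ S, μ (f s) ≤ r) :
    μ (⋃ s ∈ S, f s) ≤ r := by
  rw [Set.biUnion_eq_iUnion S fun s _ => f s]
  exact (Monotone.directed_le (hf.comp (Subtype.mono_coe (· ∈ S)))).measure_iUnion.trans_le
    (iSup_le fun s => h s s.2)

def KeptAt (c : Code) (k s : ℕ) (σ : Str) : Prop :=
  enumAt c k s = some σ ∧ MeasureLE k (enumUpTo c k (s + 1))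

def trimLevel (c : Code) (k : ℕ) : Set Str := {σ | ∃ s, KeptAt c k s σ}

theorem primrecPred_keptAt :
    PrimrecPred fun x : ((Code × ℕ) × ℕ) × Str => KeptAt x.1.1.1 x.1.1.2 x.1.2 x.2 :=
  (Primrec.eq.comp (primrec_enumAt.comp fst) (option_some.comp snd)).and
    (primrecRel_measureLE.comp (snd.comp (fst.comp fst))
      (primrec_enumUpTo.comp ((fst.comp fst).pair (succ.comp (snd.comp fst)))))

def universalEnum : Set (ℕ × Str) :=
  {p | ∃ e, p.2 ∈ trimLevel (Denumerable.ofNat Code e) (p.1 + e + 1)}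

def universalTest (n : ℕ) : Set Seq := ⋃ σ ∈ {σ : Str | (n, σ) ∈ universalEnum}, cyl σ

theorem cePred_universalEnum : CEPred (· ∈ universalEnum) := by
  have he : Primrec fun y : (ℕ × Str) × ℕ => y.2.unpair.1 := fst.comp (unpair.comp snd)
  have hstep : PrimrecPred fun y : (ℕ × Str) × ℕ =>
      KeptAt (Denumerable.ofNat Code y.2.unpair.1) (y.1.1 + y.2.unpair.1 + 1) y.2.unpair.2 y.1.2 :=
    primrecPred_keptAt.comp
      ((((Primrec.ofNat Code).comp he).pair (succ.comp (nat_add.comp (fst.comp fst) he))).pair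
        (snd.comp (unpair.comp snd)) |>.pair (snd.comp fst))
  refine REPred.of_eq (CEPred.exists_of_primrecPred hstep) fun p =>
    ⟨fun ⟨m, hm⟩ => ⟨m.unpair.1, m.unpair.2, hm⟩, fun ⟨e, s, hs⟩ => ⟨Nat.pair e s, ?_⟩⟩
  simpa using hs

theorem tsum_inv_two_pow_add_add_one (n : ℕ) :
    ∑' e : ℕ, (2 : ℝ≥0∞)⁻¹ ^ (n + e + 1) = 2⁻¹ ^ n := by
  simp_rw [add_assoc, pow_add _ n]
  rw [ENNReal.tsum_mul_left, ENNReal.tsum_geometric_add_one, ENNReal.one_sub_inv_two, inv_inv,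
    ENNReal.inv_mul_cancel two_ne_zero ENNReal.ofNat_ne_top, mul_one]

section FairCoin

variable {μ : Measure Seq} (hμ : FairCoin μ)
include hμ

theorem measure_trimLevel_le (c : Code) (k : ℕ) : μ (⋃ σ ∈ trimLevel c k, cyl σ) ≤ 2⁻¹ ^ k := by
  refine (measure_mono ?_).trans (measure_biUnion_le_of_monotone (monotone_cylUnion_enumUpTo c k)
    {s | MeasureLE k (enumUpTo c k s)} fun s hs => (measureLE_iff hμ).1 hs)
  refine Set.iUnion₂_subset fun σ ⟨s, hs, hle⟩ => ?_
  have hσ : σ ∈ enumUpTo c k (s + 1) := mem_enumUpTo.2 ⟨s, s.lt_succ_self, hs⟩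
  exact (Set.subset_biUnion_of_mem (u := cyl) hσ).trans
    (Set.subset_biUnion_of_mem (u := fun s => cylUnion (enumUpTo c k s)) hle)

theorem mem_trimLevel {c : Code} {k : ℕ}
    (hc : μ (⋃ σ ∈ {σ | ∃ s, enumAt c k s = some σ}, cyl σ) ≤ 2⁻¹ ^ k) {s : ℕ} {σ : Str}
    (hs : enumAt c k s = some σ) : σ ∈ trimLevel c k := by
  refine ⟨s, hs, (measureLE_iff hμ).2 ((measure_mono ?_).trans hc)⟩
  refine Set.biUnion_subset_biUnion_left fun τ hτ => ?_
  obtain ⟨m, -, hm⟩ := mem_enumUpTo.1 hτ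
  exact ⟨m, hm⟩

theorem measure_universalTest_le (n : ℕ) : μ (universalTest n) ≤ 2⁻¹ ^ n := by
  have hsplit : universalTest n =
      ⋃ e, ⋃ σ ∈ trimLevel (Denumerable.ofNat Code e) (n + e + 1), cyl σ := by
    ext A
    simp only [universalTest, universalEnum, Set.mem_ofPred_eq, Set.mem_iUnion, exists_prop]
    grind
  calc μ (universalTest n)
      ≤ ∑' e, μ (⋃ σ ∈ trimLevel (Denumerable.ofNat Code e) (n + e + 1), cyl σ) :=
        hsplit ▸ measure_iUnion_le _
    _ ≤ ∑' e : ℕ, (2 : ℝ≥0∞)⁻¹ ^ (n + e + 1) :=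
        ENNReal.tsum_le_tsum fun e => measure_trimLevel_le hμ _ _
    _ = 2⁻¹ ^ n := tsum_inv_two_pow_add_add_one n

theorem iInter_subset_iInter_universalTest {V : ℕ → Set Seq} (hV : MLTest μ V) :
    (⋂ i, V i) ⊆ ⋂ n, universalTest n := by
  obtain ⟨W, hW, hVW, hVμ⟩ := hV
  obtain ⟨c, hc⟩ := hW.exists_code
  have hlevel (k : ℕ) : {σ | ∃ s, enumAt c k s = some σ} = {σ | (k, σ) ∈ W} :=
    Set.ext fun σ => exists_enumAt_eq_some.trans (hc (k, σ)).symm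
  refine fun A hA => Set.mem_iInter.2 fun n => ?_
  have hAk := Set.mem_iInter.1 hA (n + encode c + 1)
  rw [hVW, Set.mem_iUnion₂] at hAk
  obtain ⟨σ, hσ, hAσ⟩ := hAk
  obtain ⟨s, hs⟩ := exists_enumAt_eq_some.2 ((hc _).1 hσ)
  have hkept : σ ∈ trimLevel c (n + encode c + 1) :=
    mem_trimLevel hμ (by rw [hlevel, ← hVW]; exact hVμ _) hs
  have hmem : (n, σ) ∈ universalEnum := ⟨encode c, by rwa [Denumerable.ofNat_encode]⟩
  exact Set.mem_biUnion hmem hAσ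

end FairCoin

/-- **Existence of a universal Martin-Löf test** (Martin-Löf): there is a Martin-Löf
test `⟨U_i⟩` such that for every Martin-Löf test `⟨V_i⟩`, `⋂_i V_i ⊆ ⋂_i U_i`. -/
theorem universal_MLTest (μ : MeasureTheory.Measure Seq) (hμ : FairCoin μ) :
    ∃ U : ℕ → Set Seq, MLTest μ U ∧
      ∀ V : ℕ → Set Seq, MLTest μ V → (⋂ i, V i) ⊆ ⋂ i, U i :=
  ⟨universalTest, ⟨universalEnum, cePred_universalEnum, fun _ => rfl, measure_universalTest_le hμ⟩,
    fun _ hV => iInter_subset_iInter_universalTest hμ hV⟩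

end AR
end

section
/- Machine existence (KC) theorem: Given a computable function i ↦ (n_i, σ_i) from ℕ to ℕ × 2^{<ω} such that Σ_{i∈ω} 2^{-n_i} ≤ 1, there exist a prefix-free machine M and a sequence of strings ⟨τ_i⟩_{i∈ω} such that for every i, M(τ_i)↓ = σ_i and |τ_i| = n_i. -/
open scoped ENNReal NNReal Classical

namespace AR

/-!
Kraft–Chaitin allocation. We maintain a list of free strings, pairwise incompatible and of
pairwise distinct lengths, whose total weight `∑ 2^{-|s|}` is one minus the weight requested so
far; initially it is `[ε]`. A request of length `n` is served by the longest free string `u` with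
`|u| ≤ n`: the code is `u0^{n-|u|}`, and `u` is replaced by the leftover strings `u0^k1`,
`k < n - |u|`. Their lengths lie in `(|u|, n]`, where by the choice of `u` no other free string
has its length. Because free lengths are distinct, the free weight is a sum of distinct powers
of `1/2`, so free weight at least `2^{-n}` forces a free string of length at most `n`. The
machine decodes an input by searching for its index in the computable sequence of codes.
-/

namespace KC

def Incompatible (a b : Str) : Prop :=
  ∃ c x y, x ≠ y ∧ c ++ [x] <+: a ∧ c ++ [y] <+: b

namespace Incompatible

variable {a a' b b' : Str}

theorem symm : Incompatible a b → Incompatible b a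
  | ⟨c, x, y, hxy, ha, hb⟩ => ⟨c, y, x, hxy.symm, hb, ha⟩

instance : Std.Symm Incompatible := ⟨fun _ _ => symm⟩

theorem of_prefix_left (h : Incompatible a b) (ha : a <+: a') : Incompatible a' b :=
  let ⟨c, x, y, hxy, hca, hcb⟩ := h
  ⟨c, x, y, hxy, hca.trans ha, hcb⟩

theorem of_prefix_right (h : Incompatible a b) (hb : b <+: b') : Incompatible a b' :=
  (h.symm.of_prefix_left hb).symm

theorem not_prefix (h : Incompatible a b) : ¬ a <+: b := fun hab => by
  obtain ⟨c, x, y, hxy, hca, hcb⟩ := h.of_prefix_left hab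
  have := (List.prefix_of_prefix_length_le hca hcb (by simp)).eq_of_length (by simp)
  exact hxy (by simpa using this)

theorem ne (h : Incompatible a b) : a ≠ b := by
  rintro rfl
  exact h.not_prefix (List.prefix_refl a)

end Incompatible

def pad (s : Str) (n : ℕ) : Str := s ++ List.replicate (n - s.length) false

def sibling (s : Str) (k : ℕ) : Str := s ++ List.replicate k false ++ [true]

def siblings (s : Str) (n : ℕ) : List Str := (List.range (n - s.length)).map (sibling s)

theorem length_pad {s : Str} {n : ℕ} (h : s.length ≤ n) : (pad s n).length = n := by
  simp [pad]; omega

theorem length_sibling (s : Str) (k : ℕ) : (sibling s k).length = s.length + k + 1 := by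
  simp [sibling]; omega

theorem prefix_pad (s : Str) (n : ℕ) : s <+: pad s n := List.prefix_append _ _

theorem prefix_sibling (s : Str) (k : ℕ) : s <+: sibling s k := by
  rw [sibling, List.append_assoc]; exact List.prefix_append _ _

theorem incompatible_sibling_of_lt (s : Str) {k m : ℕ} (h : k < m) (t : Str) :
    Incompatible (sibling s k) (s ++ List.replicate m false ++ t) := by
  obtain ⟨d, rfl⟩ := Nat.exists_eq_add_of_lt h
  refine ⟨s ++ List.replicate k false, true, false, by simp, List.prefix_refl _,
    ⟨List.replicate d false ++ t, ?_⟩⟩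
  rw [show k + d + 1 = k + 1 + d by omega, List.replicate_add, List.replicate_succ']
  simp

theorem incompatible_sibling_pad {s : Str} {k n : ℕ} (h : k < n - s.length) :
    Incompatible (sibling s k) (pad s n) := by
  simpa [pad] using incompatible_sibling_of_lt s h []

theorem pairwise_siblings (s : Str) (n : ℕ) : (siblings s n).Pairwise Incompatible :=
  List.pairwise_map.2 <| List.pairwise_lt_range.imp fun h => incompatible_sibling_of_lt s h [true]

def bestFit (n : ℕ) (L : List Str) : Option Str :=
  (L.filter (·.length ≤ n)).argmax List.length

theorem bestFit_spec {n : ℕ} {L : List Str} {u : Str} (h : bestFit n L = some u) :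
    u ∈ L ∧ u.length ≤ n ∧ ∀ s ∈ L, s.length ≤ n → s.length ≤ u.length := by
  have hu := List.mem_filter.1 (List.argmax_mem (f := List.length) h)
  exact ⟨hu.1, by simpa using hu.2, fun s hs hsn =>
    List.le_of_mem_argmax (List.mem_filter.2 ⟨hs, by simpa using hsn⟩) h⟩

theorem bestFit_ne_none {n : ℕ} {L : List Str} (h : ∃ s ∈ L, s.length ≤ n) :
    bestFit n L ≠ none := by
  simpa [bestFit, List.filter_eq_nil_iff] using h

/-- The `none` branch is never taken when the requests respect the weight bound. -/
def allocate (n : ℕ) (L : List Str) : Str × List Str :=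
  match bestFit n L with
  | some u => (pad u n, siblings u n ++ L.erase u)
  | none => ([], L)

theorem allocate_of_bestFit_eq_some {n : ℕ} {L : List Str} {u : Str} (h : bestFit n L = some u) :
    allocate n L = (pad u n, siblings u n ++ L.erase u) := by
  simp [allocate, h]

noncomputable def weight (L : List Str) : ℝ≥0∞ := (L.map fun s => 2⁻¹ ^ s.length).sum

theorem weight_append (L L' : List Str) : weight (L ++ L') = weight L + weight L' := by
  simp [weight]

theorem inv_two_pow_succ_add_self (n : ℕ) :
    (2 : ℝ≥0∞)⁻¹ ^ (n + 1) + 2⁻¹ ^ (n + 1) = 2⁻¹ ^ n := by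
  rw [← two_mul, pow_succ, mul_comm, mul_assoc,
    ENNReal.inv_mul_cancel (by norm_num) (by norm_num), mul_one]

theorem weight_siblings {s : Str} {n : ℕ} (h : s.length ≤ n) :
    weight (siblings s n) + 2⁻¹ ^ n = 2⁻¹ ^ s.length := by
  induction n, h using Nat.le_induction with
  | base => simp [siblings, weight]
  | succ n hn ih =>
    rw [siblings, Nat.sub_add_comm hn, List.range_succ, List.map_append, ← siblings,
      weight_append, add_assoc]
    have hlast : weight ([n - s.length].map (sibling s)) = 2⁻¹ ^ (n + 1) := by
      simp [weight, length_sibling, Nat.add_sub_cancel' hn]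
    rw [hlast, inv_two_pow_succ_add_self, ih]

theorem sum_inv_two_pow_lt {S : Finset ℕ} {n : ℕ} (hS : ∀ k ∈ S, n < k) :
    ∑ k ∈ S, (2 : ℝ≥0∞)⁻¹ ^ k < 2⁻¹ ^ n := by
  induction S using Finset.induction_on_min generalizing n with
  | empty => simpa using ENNReal.pow_pos (by simp) n
  | insert a S hmin ih =>
    obtain ⟨d, rfl⟩ := Nat.exists_eq_add_of_lt (hS a (Finset.mem_insert_self a S))
    rw [Finset.sum_insert fun h => (hmin _ h).false]
    calc 2⁻¹ ^ (n + d + 1) + ∑ k ∈ S, (2 : ℝ≥0∞)⁻¹ ^ k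
        < 2⁻¹ ^ (n + d + 1) + 2⁻¹ ^ (n + d + 1) := ENNReal.add_lt_add_left (by simp) (ih hmin)
      _ = 2⁻¹ ^ (n + d) := inv_two_pow_succ_add_self _
      _ ≤ 2⁻¹ ^ n := pow_le_pow_right_of_le_one' (by norm_num) (Nat.le_add_right n d)

theorem exists_length_le_of_pow_le_weight {L : List Str} {n : ℕ}
    (hL : (L.map List.length).Nodup) (h : 2⁻¹ ^ n ≤ weight L) :
    ∃ s ∈ L, s.length ≤ n := by
  by_contra! hlong
  have hw : weight L = ∑ k ∈ (L.map List.length).toFinset, (2 : ℝ≥0∞)⁻¹ ^ k := by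
    rw [List.sum_toFinset _ hL, List.map_map]; rfl
  exact h.not_gt (hw ▸ sum_inv_two_pow_lt (by simpa using hlong))

structure Admissible (L : List Str) : Prop where
  pairwise : L.Pairwise Incompatible
  nodup_length : (L.map List.length).Nodup

section Allocate

variable {n : ℕ} {L : List Str} {u t c : Str}

theorem Admissible.nodup (hL : Admissible L) : L.Nodup :=
  hL.pairwise.imp Incompatible.ne

theorem Admissible.siblings_append_erase (hL : Admissible L) (hu : bestFit n L = some u) :
    Admissible (siblings u n ++ L.erase u) := by
  obtain ⟨huL, hun, hmax⟩ := bestFit_spec hu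
  refine ⟨List.pairwise_append.2 ⟨pairwise_siblings u n, hL.pairwise.sublist List.erase_sublist,
    fun a ha b hb => ?_⟩, ?_⟩
  · obtain ⟨k, -, rfl⟩ := List.mem_map.1 ha
    obtain ⟨hbu, hbL⟩ := hL.nodup.mem_erase_iff.1 hb
    exact (hL.pairwise.forall huL hbL hbu.symm).of_prefix_left (prefix_sibling u k)
  rw [List.map_append, List.nodup_append]
  refine ⟨?_, hL.nodup_length.sublist (List.erase_sublist.map _), ?_⟩
  · rw [siblings, List.map_map]
    exact List.nodup_range.map_on fun a _ b _ h => by simpa [length_sibling] using h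
  · simp only [siblings, List.map_map, List.mem_map, List.mem_range, Function.comp_apply]
    rintro _ ⟨k, hk, rfl⟩ _ ⟨s, hs, rfl⟩
    have hsL := List.mem_of_mem_erase hs
    rw [length_sibling]
    by_cases hsn : s.length ≤ n
    · have := hmax s hsL hsn; omega
    · omega

theorem incompatible_of_mem_siblings_append_erase (hc : ∀ s ∈ L, Incompatible s c)
    (hu : u ∈ L) (ht : t ∈ siblings u n ++ L.erase u) : Incompatible t c := by
  rcases List.mem_append.1 ht with ht | ht
  · obtain ⟨k, -, rfl⟩ := List.mem_map.1 ht
    exact (hc u hu).of_prefix_left (prefix_sibling u k)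
  · exact hc t (List.mem_of_mem_erase ht)

theorem incompatible_pad_of_mem_siblings_append_erase (hL : Admissible L) (hu : u ∈ L)
    (ht : t ∈ siblings u n ++ L.erase u) : Incompatible t (pad u n) := by
  rcases List.mem_append.1 ht with ht | ht
  · obtain ⟨k, hk, rfl⟩ := List.mem_map.1 ht
    exact incompatible_sibling_pad (List.mem_range.1 hk)
  · obtain ⟨htu, htL⟩ := hL.nodup.mem_erase_iff.1 ht
    exact (hL.pairwise.forall htL hu htu).of_prefix_right (prefix_pad u n)

theorem weight_siblings_append_erase (hu : u ∈ L) (hun : u.length ≤ n) :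
    weight (siblings u n ++ L.erase u) + 2⁻¹ ^ n = weight L := by
  have hperm :=
    ((List.perm_cons_erase hu).map fun s : Str => (2 : ℝ≥0∞)⁻¹ ^ s.length).sum_eq
  rw [weight_append, add_right_comm, weight_siblings hun, weight, weight, hperm, List.map_cons,
    List.sum_cons]

end Allocate

section Construction

variable (ℓ : ℕ → ℕ)

def freeList : ℕ → List Str
  | 0 => [[]]
  | i + 1 => (allocate (ℓ i) (freeList i)).2

def code (i : ℕ) : Str := (allocate (ℓ i) (freeList ℓ i)).1

structure Invariant (i : ℕ) : Prop where
  admissible : Admissible (freeList ℓ i)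
  incompatible_code : ∀ s ∈ freeList ℓ i, ∀ j < i, Incompatible s (code ℓ j)
  weight_add_sum : weight (freeList ℓ i) + ∑ j ∈ Finset.range i, 2⁻¹ ^ ℓ j = 1

variable {ℓ} (hℓ : ∑' i, (2 : ℝ≥0∞)⁻¹ ^ ℓ i ≤ 1)
include hℓ

theorem Invariant.exists_bestFit_eq_some {i : ℕ} (h : Invariant ℓ i) :
    ∃ u, bestFit (ℓ i) (freeList ℓ i) = some u := by
  have hused : ∑ j ∈ Finset.range i, (2 : ℝ≥0∞)⁻¹ ^ ℓ j + 2⁻¹ ^ ℓ i ≤ 1 := by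
    simpa [Finset.sum_range_succ] using (ENNReal.sum_le_tsum (Finset.range (i + 1))).trans hℓ
  have hfin : ∑ j ∈ Finset.range i, (2 : ℝ≥0∞)⁻¹ ^ ℓ j ≠ ⊤ :=
    (le_self_add.trans hused).trans_lt ENNReal.one_lt_top |>.ne
  have hbudget : (2 : ℝ≥0∞)⁻¹ ^ ℓ i ≤ weight (freeList ℓ i) := by
    rw [← h.weight_add_sum, add_comm (weight _)] at hused
    exact (ENNReal.add_le_add_iff_left hfin).1 hused
  exact Option.ne_none_iff_exists'.1 <| bestFit_ne_none <|
    exists_length_le_of_pow_le_weight h.admissible.nodup_length hbudget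

theorem invariant (i : ℕ) : Invariant ℓ i := by
  induction i with
  | zero =>
    exact ⟨⟨by simp [freeList], by simp [freeList]⟩, by simp, by simp [freeList, weight]⟩
  | succ i ih =>
    obtain ⟨u, hu⟩ := ih.exists_bestFit_eq_some hℓ
    obtain ⟨huL, hun, -⟩ := bestFit_spec hu
    have hfree : freeList ℓ (i + 1) = siblings u (ℓ i) ++ (freeList ℓ i).erase u := by
      simp [freeList, allocate_of_bestFit_eq_some hu]
    have hcode : code ℓ i = pad u (ℓ i) := by simp [code, allocate_of_bestFit_eq_some hu]
    refine ⟨hfree ▸ ih.admissible.siblings_append_erase hu, fun s hs j hj => ?_, ?_⟩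
    · rw [hfree] at hs
      rcases Nat.lt_succ_iff_lt_or_eq.1 hj with hj | rfl
      · exact incompatible_of_mem_siblings_append_erase
          (fun s hs => ih.incompatible_code s hs j hj) huL hs
      · exact hcode ▸ incompatible_pad_of_mem_siblings_append_erase ih.admissible huL hs
    · rw [hfree, Finset.sum_range_succ, add_comm _ (2⁻¹ ^ ℓ i), ← add_assoc,
        weight_siblings_append_erase huL hun, ih.weight_add_sum]

theorem exists_code_eq_pad (i : ℕ) :
    ∃ u ∈ freeList ℓ i, u.length ≤ ℓ i ∧ code ℓ i = pad u (ℓ i) := by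
  obtain ⟨u, hu⟩ := (invariant hℓ i).exists_bestFit_eq_some hℓ
  obtain ⟨huL, hun, -⟩ := bestFit_spec hu
  exact ⟨u, huL, hun, by simp [code, allocate_of_bestFit_eq_some hu]⟩

theorem length_code (i : ℕ) : (code ℓ i).length = ℓ i := by
  obtain ⟨u, -, hun, hcode⟩ := exists_code_eq_pad hℓ i
  rw [hcode, length_pad hun]

theorem pairwise_incompatible_code : Pairwise (Function.onFun Incompatible (code ℓ)) := by
  refine (Std.Symm.pairwise_on _).2 fun j i hji => ?_
  obtain ⟨u, huL, -, hcode⟩ := exists_code_eq_pad hℓ i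
  exact hcode ▸ ((invariant hℓ i).incompatible_code u huL j hji).symm.of_prefix_right
    (prefix_pad u (ℓ i))

end Construction

def searchMachine (τ y : ℕ → Str) : Str →. Str := fun σ =>
  (Nat.rfind fun i => Part.some (decide (τ i = σ))).map y

section SearchMachine

variable {τ y : ℕ → Str}

theorem exists_eq_of_dom_searchMachine {σ : Str} (h : (searchMachine τ y σ).Dom) :
    ∃ i, τ i = σ := by
  obtain ⟨i, hi, -⟩ := Nat.rfind_dom.1 h
  exact ⟨i, by simpa using hi⟩

theorem searchMachine_apply (hτ : Function.Injective τ) (i : ℕ) :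
    searchMachine τ y (τ i) = Part.some (y i) := by
  have hi : i ∈ Nat.rfind fun j => Part.some (decide (τ j = τ i)) :=
    Nat.mem_rfind.2 ⟨by simp, fun hj => by simpa using hτ.ne hj.ne⟩
  rw [searchMachine, Part.eq_some_iff.2 hi, Part.map_some]

theorem prefixFree_dom_searchMachine (hτ : Pairwise (Function.onFun Incompatible τ)) :
    PrefixFree {σ | (searchMachine τ y σ).Dom} := by
  rintro _ hσ _ hσ' hpre
  obtain ⟨i, rfl⟩ := exists_eq_of_dom_searchMachine (y := y) hσ
  obtain ⟨j, rfl⟩ := exists_eq_of_dom_searchMachine (y := y) hσ'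
  by_contra hne
  exact (hτ fun hij => hne (congrArg τ hij)).not_prefix hpre

theorem partrec_searchMachine (hτ : Computable τ) (hy : Computable y) :
    Partrec (searchMachine τ y) :=
  (Partrec.rfind (Computable₂.partrec₂
    (Primrec.eq.decide.to_comp.comp (hτ.comp Computable.snd) Computable.fst).to₂)).map
    (hy.comp Computable.snd).to₂

end SearchMachine

section Computability

open Primrec

theorem primrec_replicate {α : Type*} [Primcodable α] (a : α) :
    Primrec fun k => List.replicate k a :=
  (list_map list_range (const a).to₂).of_eq fun k => by simp

theorem primrec_erase {α : Type*} [Primcodable α] [BEq α] [LawfulBEq α] :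
    Primrec₂ (List.erase : List α → α → List α) := by
  have hrec := list_rec (f := fun p : List α × α => p.1) (g := fun _ => [])
    (h := fun p q => if q.1 = p.2 then q.2.1 else q.1 :: q.2.2) fst (const [])
    (ite (Primrec.eq.comp (fst.comp snd) (snd.comp fst)) (fst.comp (snd.comp snd))
      (list_cons.comp (fst.comp snd) (snd.comp (snd.comp snd)))).to₂
  refine hrec.of_eq fun ⟨L, a⟩ => ?_
  induction L with
  | nil => rfl
  | cons b L ih => simp [List.erase_cons, ← ih]

theorem primrec_argmax {α : Type*} [Primcodable α] {f : α → ℕ} (hf : Primrec f) :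
    Primrec (List.argmax f) := by
  have hstep : Primrec₂ (List.argAux fun b c => f c < f b) :=
    option_casesOn fst (option_some.comp snd)
      (ite (nat_lt.comp (hf.comp snd) (hf.comp (snd.comp fst)))
        (option_some.comp (snd.comp fst)) (option_some.comp snd)).to₂
  exact list_foldl Primrec.id (const none) (hstep.comp (fst.comp snd) (snd.comp snd)).to₂

theorem primrec_pad : Primrec₂ pad :=
  list_append.comp fst ((primrec_replicate false).comp (nat_sub.comp snd (list_length.comp fst)))

theorem primrec_sibling : Primrec₂ sibling :=
  list_append.comp (list_append.comp fst ((primrec_replicate false).comp snd)) (const [true])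

theorem primrec_siblings : Primrec₂ siblings :=
  list_map (list_range.comp (nat_sub.comp snd (list_length.comp fst)))
    (primrec_sibling.comp (fst.comp fst) snd).to₂

theorem primrec_bestFit : Primrec₂ bestFit := by
  have hle : PrimrecRel fun (s : Str) (n : ℕ) => s.length ≤ n :=
    nat_le.comp (list_length.comp fst) snd
  exact (primrec_argmax list_length).comp (hle.listFilter.comp snd fst)

theorem primrec_allocate : Primrec₂ allocate := by
  have hsome : Primrec₂ fun (p : ℕ × List Str) u =>
      (pad u p.1, siblings u p.1 ++ p.2.erase u) :=
    ((primrec_pad.comp snd (fst.comp fst)).pair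
      (list_append.comp (primrec_siblings.comp snd (fst.comp fst))
        (primrec_erase.comp (snd.comp fst) snd))).to₂
  refine (option_casesOn primrec_bestFit ((const []).pair snd) hsome).of_eq fun ⟨n, L⟩ => ?_
  cases h : bestFit n L <;> simp [allocate, h]

variable {ℓ : ℕ → ℕ}

theorem computable_freeList (hℓ : Computable ℓ) : Computable (freeList ℓ) := by
  have hstep : Computable₂ fun (_ : ℕ) (p : ℕ × List Str) => (allocate (ℓ p.1) p.2).2 :=
    (Computable.snd.comp (primrec_allocate.to_comp.comp (hℓ.comp Computable.fst)
      Computable.snd)).comp Computable.snd |>.to₂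
  refine (Computable.nat_rec Computable.id (Computable.const [[]]) hstep).of_eq fun i => ?_
  induction i with
  | zero => rfl
  | succ i ih => simp only [freeList]; rw [← ih]; rfl

theorem computable_code (hℓ : Computable ℓ) : Computable (code ℓ) :=
  Computable.fst.comp (primrec_allocate.to_comp.comp hℓ (computable_freeList hℓ))

end Computability

end KC

open KC

/-- **Machine existence (KC) theorem**: given a computable enumeration of requests
`i ↦ (n_i, σ_i)` with `Σ_i 2^{-n_i} ≤ 1`, there are a prefix-free machine `M` and
strings `⟨τ_i⟩` with `M(τ_i)↓ = σ_i` and `|τ_i| = n_i` for every `i`. -/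
theorem machine_existence (F : ℕ → ℕ × Str) (hF : Computable F)
    (hwt : (∑' i : ℕ, (2 : ℝ≥0∞)⁻¹ ^ (F i).1) ≤ 1) :
    ∃ M : Str →. Str, PrefixFreeMachine M ∧
      ∃ τ : ℕ → Str, ∀ i : ℕ,
        M (τ i) = Part.some (F i).2 ∧ (τ i).length = (F i).1 := by
  have hcode : Pairwise (Function.onFun Incompatible (code fun i => (F i).1)) :=
    pairwise_incompatible_code hwt
  have hinj : Function.Injective (code fun i => (F i).1) := fun i j h =>
    by_contra fun hij => (hcode hij).ne h
  refine ⟨searchMachine (code fun i => (F i).1) fun i => (F i).2,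
    ⟨partrec_searchMachine (computable_code (Computable.fst.comp hF)) (Computable.snd.comp hF),
      prefixFree_dom_searchMachine hcode⟩,
    code fun i => (F i).1, fun i => ⟨searchMachine_apply hinj i, length_code hwt i⟩⟩

end AR
end
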